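/- Let δ > 0, λ ≥ 0, and suppose (1/m)‖𝒜(X)‖₁ ≤ (√(2/π) + δ)‖X‖_F for every X ∈ ℝ^{n₁×n₂} of rank at most 2r. Then the function (U, V) ↦ g(U, V) + ((√(2/π) + δ + 2λ)/2)·(‖U‖_F² + ‖V‖_F²) is convex on ℝ^{n₁×r} × ℝ^{n₂×r}; that is, g is weakly convex with parameter τ = √(2/π) + δ + 2λ. -/
import Mathlib


open Matrix
open scoped BigOperators

/-- Frobenius norm of a real matrix. -/
noncomputable def frobNorm {α β : Type*} [Fintype α] [Fintype β] (A : Matrix α β ℝ) : ℝ :=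
  Real.sqrt (∑ i, ∑ j, (A i j) ^ 2)

/-- ℓ₁-norm of a vector in `ℝ^m`. -/
noncomputable def l1Norm {m : ℕ} (v : Fin m → ℝ) : ℝ := ∑ i, |v i|

/-- The linear measurement operator `𝒜(X)ᵢ = ⟨Aᵢ, X⟩ = trace(Aᵢᵀ X)`. -/
noncomputable def measOp {α β : Type*} [Fintype α] [Fintype β] {m : ℕ}
    (A : Fin m → Matrix α β ℝ) (X : Matrix α β ℝ) : Fin m → ℝ :=
  fun i => ∑ j, ∑ k, A i j k * X j k

/-- The regularized ℓ₁-loss objective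
`g(U,V) = (1/m) ‖y − 𝒜(UVᵀ)‖₁ + λ ‖UᵀU − VᵀV‖_F` in the general case. -/
noncomputable def objG {n₁ n₂ r m : ℕ} (A : Fin m → Matrix (Fin n₁) (Fin n₂) ℝ)
    (y : Fin m → ℝ) (lam : ℝ) (U : Matrix (Fin n₁) (Fin r) ℝ)
    (V : Matrix (Fin n₂) (Fin r) ℝ) : ℝ :=
  (1 / m) * l1Norm (fun i => y i - measOp A (U * Vᵀ) i) + lam * frobNorm (Uᵀ * U - Vᵀ * V)

section aux
variable {α β γ : Type*} [Fintype α] [Fintype β] [Fintype γ]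

lemma sumSq_nonneg (A : Matrix α β ℝ) : 0 ≤ ∑ i, ∑ j, (A i j)^2 :=
  Finset.sum_nonneg fun _ _ => Finset.sum_nonneg fun _ _ => sq_nonneg _

lemma frobNorm_nonneg (A : Matrix α β ℝ) : 0 ≤ frobNorm A := Real.sqrt_nonneg _

lemma frobNorm_sq (A : Matrix α β ℝ) : frobNorm A ^ 2 = ∑ i, ∑ j, (A i j)^2 :=
  Real.sq_sqrt (sumSq_nonneg A)

lemma sum_mul_le_frob (A B : Matrix α β ℝ) :
    ∑ i, ∑ j, A i j * B i j ≤ frobNorm A * frobNorm B := by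
  have h : (∑ p : α × β, A p.1 p.2 * B p.1 p.2)^2 ≤
      (∑ p : α × β, (A p.1 p.2)^2) * ∑ p : α × β, (B p.1 p.2)^2 :=
    Finset.sum_mul_sq_le_sq_mul_sq Finset.univ _ _
  rw [Fintype.sum_prod_type, Fintype.sum_prod_type, Fintype.sum_prod_type] at h
  calc ∑ i, ∑ j, A i j * B i j ≤ |∑ i, ∑ j, A i j * B i j| := le_abs_self _
    _ = Real.sqrt ((∑ i, ∑ j, A i j * B i j)^2) := (Real.sqrt_sq_eq_abs _).symm
    _ ≤ Real.sqrt ((∑ i, ∑ j, (A i j)^2) * ∑ i, ∑ j, (B i j)^2) := Real.sqrt_le_sqrt h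
    _ = frobNorm A * frobNorm B := by
        rw [Real.sqrt_mul (sumSq_nonneg A)]; rfl

lemma frobNorm_add_le (A B : Matrix α β ℝ) : frobNorm (A + B) ≤ frobNorm A + frobNorm B := by
  have hcs := sum_mul_le_frob A B
  have hA := frobNorm_sq A
  have hB := frobNorm_sq B
  have hexp : ∑ i, ∑ j, ((A + B) i j)^2
      = (∑ i, ∑ j, (A i j)^2) + (∑ i, ∑ j, (B i j)^2) + 2 * ∑ i, ∑ j, A i j * B i j := by
    simp only [Matrix.add_apply, add_sq, Finset.sum_add_distrib, Finset.mul_sum,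
      ← Finset.sum_add_distrib]
    refine Finset.sum_congr rfl fun i _ => Finset.sum_congr rfl fun j _ => by ring
  have h2 : ∑ i, ∑ j, ((A + B) i j)^2 ≤ (frobNorm A + frobNorm B)^2 := by nlinarith
  calc frobNorm (A + B) = Real.sqrt (∑ i, ∑ j, ((A + B) i j)^2) := rfl
    _ ≤ Real.sqrt ((frobNorm A + frobNorm B)^2) := Real.sqrt_le_sqrt h2
    _ = frobNorm A + frobNorm B := Real.sqrt_sq (by have := frobNorm_nonneg A; have := frobNorm_nonneg B; linarith)

lemma frobNorm_smul (c : ℝ) (A : Matrix α β ℝ) : frobNorm (c • A) = |c| * frobNorm A := by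
  simp only [frobNorm, Matrix.smul_apply, smul_eq_mul, mul_pow, ← Finset.mul_sum]
  rw [Real.sqrt_mul (sq_nonneg c), Real.sqrt_sq_eq_abs]

lemma frobNorm_neg (A : Matrix α β ℝ) : frobNorm (-A) = frobNorm A := by
  simp [frobNorm]

lemma frobNorm_sub_le (A B : Matrix α β ℝ) : frobNorm (A - B) ≤ frobNorm A + frobNorm B := by
  rw [sub_eq_add_neg]
  calc frobNorm (A + -B) ≤ frobNorm A + frobNorm (-B) := frobNorm_add_le A (-B)
    _ = frobNorm A + frobNorm B := by rw [frobNorm_neg]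

lemma frobNorm_transpose (A : Matrix α β ℝ) : frobNorm Aᵀ = frobNorm A := by
  simp only [frobNorm, Matrix.transpose_apply]
  rw [Finset.sum_comm]

lemma frobNorm_mul_le (A : Matrix α γ ℝ) (B : Matrix γ β ℝ) :
    frobNorm (A * B) ≤ frobNorm A * frobNorm B := by
  have key : ∑ i, ∑ j, ((A * B) i j)^2 ≤ (∑ i, ∑ k, (A i k)^2) * (∑ k, ∑ j, (B k j)^2) := by
    calc ∑ i, ∑ j, ((A * B) i j)^2
        ≤ ∑ i, ∑ j, (∑ k, (A i k)^2) * (∑ k, (B k j)^2) := by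
          refine Finset.sum_le_sum fun i _ => Finset.sum_le_sum fun j _ => ?_
          simpa [Matrix.mul_apply] using
            Finset.sum_mul_sq_le_sq_mul_sq Finset.univ (fun k => A i k) (fun k => B k j)
      _ = (∑ i, ∑ k, (A i k)^2) * (∑ k, ∑ j, (B k j)^2) := by
          rw [Finset.sum_mul]
          refine Finset.sum_congr rfl fun i _ => ?_
          rw [← Finset.mul_sum]
          congr 1
          exact Finset.sum_comm
  calc frobNorm (A * B) = Real.sqrt (∑ i, ∑ j, ((A * B) i j)^2) := rfl
    _ ≤ Real.sqrt ((∑ i, ∑ k, (A i k)^2) * (∑ k, ∑ j, (B k j)^2)) := Real.sqrt_le_sqrt key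
    _ = frobNorm A * frobNorm B := by rw [Real.sqrt_mul (sumSq_nonneg A)]; rfl

end aux

section aux2
variable {α β γ : Type*} [Fintype α] [Fintype β] [Fintype γ]
set_option linter.unusedSectionVars false

lemma combo_mul (a : ℝ) (U₁ U₂ : Matrix α γ ℝ) (V₁ V₂ : Matrix β γ ℝ) :
    (a • U₁ + (1 - a) • U₂) * (a • V₁ + (1 - a) • V₂)ᵀ =
      a • (U₁ * V₁ᵀ) + (1 - a) • (U₂ * V₂ᵀ) - (a * (1 - a)) • ((U₁ - U₂) * (V₁ - V₂)ᵀ) := by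
  ext i j
  simp only [Matrix.mul_apply, Matrix.add_apply, Matrix.sub_apply, Matrix.smul_apply,
    Matrix.transpose_apply, smul_eq_mul, Finset.mul_sum, ← Finset.sum_add_distrib,
    ← Finset.sum_sub_distrib]
  exact Finset.sum_congr rfl fun k _ => by ring

lemma combo_gram (a : ℝ) (U₁ U₂ : Matrix α γ ℝ) :
    (a • U₁ + (1 - a) • U₂)ᵀ * (a • U₁ + (1 - a) • U₂) =
      a • (U₁ᵀ * U₁) + (1 - a) • (U₂ᵀ * U₂) - (a * (1 - a)) • ((U₁ - U₂)ᵀ * (U₁ - U₂)) := by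
  ext i j
  simp only [Matrix.mul_apply, Matrix.add_apply, Matrix.sub_apply, Matrix.smul_apply,
    Matrix.transpose_apply, smul_eq_mul, Finset.mul_sum, ← Finset.sum_add_distrib,
    ← Finset.sum_sub_distrib]
  exact Finset.sum_congr rfl fun k _ => by ring

lemma combo_sumsq (a : ℝ) (U₁ U₂ : Matrix α β ℝ) :
    ∑ i, ∑ j, ((a • U₁ + (1 - a) • U₂) i j)^2 =
      a * (∑ i, ∑ j, (U₁ i j)^2) + (1 - a) * (∑ i, ∑ j, (U₂ i j)^2)
        - a * (1 - a) * ∑ i, ∑ j, ((U₁ - U₂) i j)^2 := by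
  simp only [Matrix.add_apply, Matrix.sub_apply, Matrix.smul_apply, smul_eq_mul,
    Finset.mul_sum, ← Finset.sum_add_distrib, ← Finset.sum_sub_distrib]
  exact Finset.sum_congr rfl fun i _ => Finset.sum_congr rfl fun j _ => by ring

lemma measOp_combo {m : ℕ} (A : Fin m → Matrix α β ℝ) (a c : ℝ) (X Y E : Matrix α β ℝ) (i : Fin m) :
    measOp A (a • X + (1 - a) • Y - c • E) i =
      a * measOp A X i + (1 - a) * measOp A Y i - c * measOp A E i := by
  simp only [measOp, Matrix.add_apply, Matrix.sub_apply, Matrix.smul_apply, smul_eq_mul,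
    Finset.mul_sum, ← Finset.sum_add_distrib, ← Finset.sum_sub_distrib]
  exact Finset.sum_congr rfl fun j _ => Finset.sum_congr rfl fun k _ => by ring
end aux2

set_option maxHeartbeats 2000000 in
/-- Proposition 4.2: under the upper ℓ1/ℓ2-RIP bound, the regularized objective `g` is
weakly convex with parameter `τ = √(2/π) + δ + 2λ`. -/
theorem stmt16 {n₁ n₂ r m : ℕ} (hm : 0 < m)
    (A : Fin m → Matrix (Fin n₁) (Fin n₂) ℝ) (y : Fin m → ℝ)
    (δ lam : ℝ) (hδ : 0 < δ) (hlam : 0 ≤ lam)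
    (hRIPub : ∀ X : Matrix (Fin n₁) (Fin n₂) ℝ, X.rank ≤ 2 * r →
      (1 / m) * l1Norm (measOp A X) ≤ (Real.sqrt (2 / Real.pi) + δ) * frobNorm X) :
    ConvexOn ℝ Set.univ
      (fun p : Matrix (Fin n₁) (Fin r) ℝ × Matrix (Fin n₂) (Fin r) ℝ =>
        objG A y lam p.1 p.2 +
          (Real.sqrt (2 / Real.pi) + δ + 2 * lam) / 2 *
            ((frobNorm p.1) ^ 2 + (frobNorm p.2) ^ 2)) := by
  have hL0 : (0:ℝ) ≤ Real.sqrt (2 / Real.pi) + δ := by positivity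
  refine ⟨convex_univ, ?_⟩
  rintro ⟨U₁, V₁⟩ - ⟨U₂, V₂⟩ - a b ha hb hab
  obtain rfl : b = 1 - a := by linarith
  set L : ℝ := Real.sqrt (2 / Real.pi) + δ with hLdef
  simp only [Prod.smul_mk, Prod.mk_add_mk, smul_eq_mul, objG]
  set ΔU := U₁ - U₂ with hΔU
  set ΔV := V₁ - V₂ with hΔV
  set E := ΔU * ΔVᵀ with hE
  -- rank bound and RIP for E
  have hrank : E.rank ≤ 2 * r := by
    have h1 : E.rank ≤ ΔU.rank := Matrix.rank_mul_le_left ΔU ΔVᵀ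
    have h2 : ΔU.rank ≤ r := by simpa using Matrix.rank_le_card_width ΔU
    omega
  have hRIP := hRIPub E hrank
  -- S := fΔU² + fΔV², frobNorm E ≤ S/2
  have hfE : frobNorm E ≤ (frobNorm ΔU ^ 2 + frobNorm ΔV ^ 2) / 2 := by
    have h1 : frobNorm E ≤ frobNorm ΔU * frobNorm ΔVᵀ := frobNorm_mul_le ΔU ΔVᵀ
    rw [frobNorm_transpose] at h1
    nlinarith [sq_nonneg (frobNorm ΔU - frobNorm ΔV)]
  have hm' : (0:ℝ) ≤ 1 / (m:ℝ) := by positivity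
  have hab' : (0:ℝ) ≤ a * (1 - a) := mul_nonneg ha hb
  -- loss term bound
  have hloss : (1 / (m:ℝ)) * l1Norm (fun i => y i -
        measOp A ((a • U₁ + (1 - a) • U₂) * (a • V₁ + (1 - a) • V₂)ᵀ) i) ≤
      a * ((1 / (m:ℝ)) * l1Norm (fun i => y i - measOp A (U₁ * V₁ᵀ) i)) +
      (1 - a) * ((1 / (m:ℝ)) * l1Norm (fun i => y i - measOp A (U₂ * V₂ᵀ) i)) +
      (a * (1 - a)) * (L * ((frobNorm ΔU ^ 2 + frobNorm ΔV ^ 2) / 2)) := by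
    rw [combo_mul]
    have hpt : l1Norm (fun i => y i - measOp A
          (a • (U₁ * V₁ᵀ) + (1 - a) • (U₂ * V₂ᵀ) - (a * (1 - a)) • E) i) ≤
        a * l1Norm (fun i => y i - measOp A (U₁ * V₁ᵀ) i) +
        (1 - a) * l1Norm (fun i => y i - measOp A (U₂ * V₂ᵀ) i) +
        (a * (1 - a)) * l1Norm (measOp A E) := by
      simp only [l1Norm, Finset.mul_sum, ← Finset.sum_add_distrib]
      refine Finset.sum_le_sum fun i _ => ?_
      rw [measOp_combo]
      have heq : y i - (a * measOp A (U₁ * V₁ᵀ) i + (1 - a) * measOp A (U₂ * V₂ᵀ) i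
            - a * (1 - a) * measOp A E i) =
          a * (y i - measOp A (U₁ * V₁ᵀ) i) + (1 - a) * (y i - measOp A (U₂ * V₂ᵀ) i)
            + (a * (1 - a)) * measOp A E i := by ring
      rw [heq]
      calc |a * (y i - measOp A (U₁ * V₁ᵀ) i) + (1 - a) * (y i - measOp A (U₂ * V₂ᵀ) i)
            + (a * (1 - a)) * measOp A E i|
          ≤ |a * (y i - measOp A (U₁ * V₁ᵀ) i)| + |(1 - a) * (y i - measOp A (U₂ * V₂ᵀ) i)|
            + |(a * (1 - a)) * measOp A E i| := abs_add_three _ _ _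
        _ = a * |y i - measOp A (U₁ * V₁ᵀ) i| + (1 - a) * |y i - measOp A (U₂ * V₂ᵀ) i|
            + (a * (1 - a)) * |measOp A E i| := by
            rw [abs_mul, abs_mul, abs_mul, abs_of_nonneg ha, abs_of_nonneg hb,
              abs_of_nonneg hab']
    have h2 := mul_le_mul_of_nonneg_left hpt hm'
    have h3 : (a * (1 - a)) * ((1 / (m:ℝ)) * l1Norm (measOp A E)) ≤
        (a * (1 - a)) * (L * ((frobNorm ΔU ^ 2 + frobNorm ΔV ^ 2) / 2)) := by
      refine mul_le_mul_of_nonneg_left ?_ hab'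
      calc (1 / (m:ℝ)) * l1Norm (measOp A E) ≤ L * frobNorm E := hRIP
        _ ≤ L * ((frobNorm ΔU ^ 2 + frobNorm ΔV ^ 2) / 2) :=
            mul_le_mul_of_nonneg_left hfE hL0
    nlinarith [h2, h3]
  -- regularizer bound
  have hreg : frobNorm ((a • U₁ + (1 - a) • U₂)ᵀ * (a • U₁ + (1 - a) • U₂)
        - (a • V₁ + (1 - a) • V₂)ᵀ * (a • V₁ + (1 - a) • V₂)) ≤
      a * frobNorm (U₁ᵀ * U₁ - V₁ᵀ * V₁) + (1 - a) * frobNorm (U₂ᵀ * U₂ - V₂ᵀ * V₂)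
        + (a * (1 - a)) * (frobNorm ΔU ^ 2 + frobNorm ΔV ^ 2) := by
    rw [combo_gram, combo_gram]
    have hrearr : a • (U₁ᵀ * U₁) + (1 - a) • (U₂ᵀ * U₂) - (a * (1 - a)) • (ΔUᵀ * ΔU)
          - (a • (V₁ᵀ * V₁) + (1 - a) • (V₂ᵀ * V₂) - (a * (1 - a)) • (ΔVᵀ * ΔV)) =
        a • (U₁ᵀ * U₁ - V₁ᵀ * V₁) + (1 - a) • (U₂ᵀ * U₂ - V₂ᵀ * V₂)
          - (a * (1 - a)) • (ΔUᵀ * ΔU - ΔVᵀ * ΔV) := by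
      ext i j
      simp only [Matrix.add_apply, Matrix.sub_apply, Matrix.smul_apply, smul_eq_mul]
      ring
    rw [hrearr]
    have t1 : frobNorm (a • (U₁ᵀ * U₁ - V₁ᵀ * V₁) + (1 - a) • (U₂ᵀ * U₂ - V₂ᵀ * V₂)
          - (a * (1 - a)) • (ΔUᵀ * ΔU - ΔVᵀ * ΔV)) ≤
        frobNorm (a • (U₁ᵀ * U₁ - V₁ᵀ * V₁)) + frobNorm ((1 - a) • (U₂ᵀ * U₂ - V₂ᵀ * V₂))
          + frobNorm ((a * (1 - a)) • (ΔUᵀ * ΔU - ΔVᵀ * ΔV)) := by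
      calc frobNorm _ ≤ frobNorm (a • (U₁ᵀ * U₁ - V₁ᵀ * V₁) + (1 - a) • (U₂ᵀ * U₂ - V₂ᵀ * V₂))
            + frobNorm ((a * (1 - a)) • (ΔUᵀ * ΔU - ΔVᵀ * ΔV)) := frobNorm_sub_le _ _
        _ ≤ _ := by
            have := frobNorm_add_le (a • (U₁ᵀ * U₁ - V₁ᵀ * V₁))
              ((1 - a) • (U₂ᵀ * U₂ - V₂ᵀ * V₂))
            linarith
    have t2 : frobNorm (ΔUᵀ * ΔU - ΔVᵀ * ΔV) ≤ frobNorm ΔU ^ 2 + frobNorm ΔV ^ 2 := by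
      calc frobNorm (ΔUᵀ * ΔU - ΔVᵀ * ΔV) ≤ frobNorm (ΔUᵀ * ΔU) + frobNorm (ΔVᵀ * ΔV) :=
            frobNorm_sub_le _ _
        _ ≤ frobNorm ΔU ^ 2 + frobNorm ΔV ^ 2 := by
            have hu : frobNorm (ΔUᵀ * ΔU) ≤ frobNorm ΔUᵀ * frobNorm ΔU := frobNorm_mul_le _ _
            have hv : frobNorm (ΔVᵀ * ΔV) ≤ frobNorm ΔVᵀ * frobNorm ΔV := frobNorm_mul_le _ _
            rw [frobNorm_transpose] at hu hv
            nlinarith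
    rw [frobNorm_smul, frobNorm_smul, frobNorm_smul, abs_of_nonneg ha, abs_of_nonneg hb,
      abs_of_nonneg hab'] at t1
    have := mul_le_mul_of_nonneg_left t2 hab'
    linarith
  -- quadratic identities
  have hqU : frobNorm (a • U₁ + (1 - a) • U₂) ^ 2 =
      a * frobNorm U₁ ^ 2 + (1 - a) * frobNorm U₂ ^ 2 - a * (1 - a) * frobNorm ΔU ^ 2 := by
    rw [frobNorm_sq, frobNorm_sq, frobNorm_sq, frobNorm_sq, hΔU]
    exact combo_sumsq a U₁ U₂
  have hqV : frobNorm (a • V₁ + (1 - a) • V₂) ^ 2 =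
      a * frobNorm V₁ ^ 2 + (1 - a) * frobNorm V₂ ^ 2 - a * (1 - a) * frobNorm ΔV ^ 2 := by
    rw [frobNorm_sq, frobNorm_sq, frobNorm_sq, frobNorm_sq, hΔV]
    exact combo_sumsq a V₁ V₂
  have hlamreg := mul_le_mul_of_nonneg_left hreg hlam
  rw [hqU, hqV]
  nlinarith [hloss, hlamreg]
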